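/- arXiv:1005.4908 — 9 statements merged into one kernel-verified Lean document; each statement's English description precedes it below -/
import Mathlib

section
/- For all real numbers b1, b2, b3, the inequality b1^2 + b2^2 + b3^2 - 2 b2 b3 - 2 b3 b1 - 2 b1 b2 + 3 |b1 b2 b3|^{2/3} >= 0 holds. -/
lemma key_poly (x y z : ℝ) (hx : 0 ≤ x) (hy : 0 ≤ y) (hz : 0 ≤ z) :
    0 ≤ x^6 + y^6 + z^6 - 2*y^3*z^3 - 2*z^3*x^3 - 2*x^3*y^3 + 3*x^2*y^2*z^2 := by
  nlinarith [sq_nonneg ((y-z)*(y+z-x)), sq_nonneg ((z-x)*(z+x-y)), sq_nonneg ((x-y)*(x+y-z)),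
    mul_nonneg hx hy, mul_nonneg hy hz, mul_nonneg hz hx,
    sq_nonneg x, sq_nonneg y, sq_nonneg z,
    mul_nonneg (mul_nonneg hx hy) hz,
    sq_nonneg (x+y+z), sq_nonneg (x*y+y*z+z*x)]

lemma cube23 (x : ℝ) (hx : 0 ≤ x) : (x^3 : ℝ) ^ ((2:ℝ)/3) = x^2 := by
  rw [← Real.rpow_natCast x 3, ← Real.rpow_mul hx, ← Real.rpow_natCast x 2]
  norm_num

lemma abs_case (A B C : ℝ) (hA0 : 0 ≤ A) (hB0 : 0 ≤ B) (hC0 : 0 ≤ C) :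
    0 ≤ A^2 + B^2 + C^2 - 2*(B*C) - 2*(C*A) - 2*(A*B) + 3*(A*B*C)^((2:ℝ)/3) := by
  have ex : ∀ a : ℝ, 0 ≤ a → (a ^ ((1:ℝ)/3))^3 = a := by
    intro a ha
    rw [← Real.rpow_natCast (a ^ ((1:ℝ)/3)) 3, ← Real.rpow_mul ha]
    norm_num
  obtain ⟨x, hx0, rfl⟩ : ∃ x, 0 ≤ x ∧ x^3 = A :=
    ⟨A ^ ((1:ℝ)/3), Real.rpow_nonneg hA0 _, ex A hA0⟩
  obtain ⟨y, hy0, rfl⟩ : ∃ y, 0 ≤ y ∧ y^3 = B :=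
    ⟨B ^ ((1:ℝ)/3), Real.rpow_nonneg hB0 _, ex B hB0⟩
  obtain ⟨z, hz0, rfl⟩ : ∃ z, 0 ≤ z ∧ z^3 = C :=
    ⟨C ^ ((1:ℝ)/3), Real.rpow_nonneg hC0 _, ex C hC0⟩
  have hABC : (x^3 * y^3 * z^3) ^ ((2:ℝ)/3) = x^2 * y^2 * z^2 := by
    have : x^3 * y^3 * z^3 = (x*y*z)^3 := by ring
    rw [this, cube23 _ (by positivity)]
    ring
  rw [hABC]
  nlinarith [key_poly x y z hx0 hy0 hz0]

theorem beta_inequality (b1 b2 b3 : ℝ) :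
    0 ≤ b1^2 + b2^2 + b3^2 - 2*b2*b3 - 2*b3*b1 - 2*b1*b2
        + 3 * |b1*b2*b3| ^ ((2:ℝ)/3) := by
  have habs : |b1*b2*b3| = |b1| * |b2| * |b3| := by rw [abs_mul, abs_mul]
  have main := abs_case |b1| |b2| |b3| (abs_nonneg _) (abs_nonneg _) (abs_nonneg _)
  rw [habs]
  have c1 : b2 * b3 ≤ |b2| * |b3| := by rw [← abs_mul]; exact le_abs_self _
  have c2 : b3 * b1 ≤ |b3| * |b1| := by rw [← abs_mul]; exact le_abs_self _
  have c3 : b1 * b2 ≤ |b1| * |b2| := by rw [← abs_mul]; exact le_abs_self _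
  rw [← sq_abs b1, ← sq_abs b2, ← sq_abs b3]
  have e1 : 2*b2*b3 = 2*(b2*b3) := by ring
  have e2 : 2*b3*b1 = 2*(b3*b1) := by ring
  have e3 : 2*b1*b2 = 2*(b1*b2) := by ring
  rw [e1, e2, e3]
  generalize hR : (|b1| * |b2| * |b3|) ^ ((2:ℝ)/3) = R at main ⊢
  linarith [main, c1, c2, c3]
end

section
/- Let a2·a3 + a3·a1 + a1·a2 = 0 with all a_i nonzero real numbers and a1 + a2 + a3 < 0. Then exactly one of a1, a2, a3 is positive, the other two are negative, and the sum of any two of them is negative. -/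
theorem kasner_sign_analysis (a1 a2 a3 : ℝ)
    (hcon : a2*a3 + a3*a1 + a1*a2 = 0)
    (h1 : a1 ≠ 0) (h2 : a2 ≠ 0) (h3 : a3 ≠ 0)
    (hsum : a1 + a2 + a3 < 0) :
    ((0 < a1 ∧ a2 < 0 ∧ a3 < 0) ∨
     (0 < a2 ∧ a1 < 0 ∧ a3 < 0) ∨
     (0 < a3 ∧ a1 < 0 ∧ a2 < 0)) ∧
    a1 + a2 < 0 ∧ a2 + a3 < 0 ∧ a3 + a1 < 0 := by
  have s12 : a1 + a2 < 0 := by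
    nlinarith [sq_pos_of_ne_zero h1, sq_nonneg (a1/2 + a2), sq_nonneg (a1 + a2)]
  have s23 : a2 + a3 < 0 := by
    nlinarith [sq_pos_of_ne_zero h2, sq_nonneg (a2/2 + a3), sq_nonneg (a2 + a3)]
  have s31 : a3 + a1 < 0 := by
    nlinarith [sq_pos_of_ne_zero h3, sq_nonneg (a3/2 + a1), sq_nonneg (a3 + a1)]
  refine ⟨?_, s12, s23, s31⟩
  rcases h1.lt_or_gt with n1 | p1
  · rcases h2.lt_or_gt with n2 | p2
    · rcases h3.lt_or_gt with n3 | p3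
      · nlinarith [mul_pos (neg_pos.mpr n2) (neg_pos.mpr n3),
          mul_pos (neg_pos.mpr n3) (neg_pos.mpr n1),
          mul_pos (neg_pos.mpr n1) (neg_pos.mpr n2)]
      · exact Or.inr (Or.inr ⟨p3, n1, n2⟩)
    · rcases h3.lt_or_gt with n3 | p3
      · exact Or.inr (Or.inl ⟨p2, n1, n3⟩)
      · linarith
  · rcases h2.lt_or_gt with n2 | p2
    · rcases h3.lt_or_gt with n3 | p3
      · exact Or.inl ⟨p1, n2, n3⟩
      · linarith
    · linarith
end

section
/- Let P_n be the continuant polynomials. For all integers m-1 ≤ M < N ≤ n and all x_m,…,x_n in [1,∞): 2·P_{M-m+1}(x_m,…,x_M)·P_{n-M}(x_{M+1},…,x_n) ≥ P_{N-m+1}(x_m,…,x_N)·P_{n-N}(x_{N+1},…,x_n). -/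
/-- The continuant polynomials. -/
def cont : List ℝ → ℝ
  | [] => 1
  | [x] => x
  | x :: y :: t => x * cont (y :: t) + cont t

def contD : List ℝ → ℝ
  | [] => 0
  | [_] => 1
  | x :: y :: t => x * contD (y :: t) + contD t

lemma one_le_cont : ∀ l : List ℝ, (∀ x ∈ l, 1 ≤ x) → 1 ≤ cont l := by
  intro l
  induction l using cont.induct with
  | case1 => intro _; simp [cont]
  | case2 x => intro h; simpa [cont] using h x (by simp)
  | case3 x y t ih1 ih2 =>
    intro h
    have hx : 1 ≤ x := h x (by simp)
    have h1 : 1 ≤ cont (y :: t) := ih1 (fun z hz => h z (by simp [hz]))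
    have h2 : 1 ≤ cont t := ih2 (fun z hz => h z (by simp [hz]))
    simp only [cont]
    nlinarith

lemma contD_nonneg : ∀ l : List ℝ, (∀ x ∈ l, 1 ≤ x) → 0 ≤ contD l := by
  intro l
  induction l using contD.induct with
  | case1 => intro _; simp [contD]
  | case2 x => intro _; simp [contD]
  | case3 x y t ih1 ih2 =>
    intro h
    have hx : 1 ≤ x := h x (by simp)
    have h1 := ih1 (fun z hz => h z (by simp [hz]))
    have h2 := ih2 (fun z hz => h z (by simp [hz]))
    simp only [contD]
    nlinarith

lemma contD_le_cont : ∀ l : List ℝ, (∀ x ∈ l, 1 ≤ x) → contD l ≤ cont l := by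
  intro l
  induction l using cont.induct with
  | case1 => intro _; simp [cont, contD]
  | case2 x => intro h; simpa [cont, contD] using h x (by simp)
  | case3 x y t ih1 ih2 =>
    intro h
    have hx : 1 ≤ x := h x (by simp)
    have h1 := ih1 (fun z hz => h z (by simp [hz]))
    have h2 := ih2 (fun z hz => h z (by simp [hz]))
    simp only [cont, contD]
    nlinarith

lemma euler : ∀ (a v : List ℝ), v ≠ [] →
    cont (a ++ v) = cont a * cont v + contD a * cont v.tail := by
  intro a
  induction a using cont.induct with
  | case1 => intro v _; simp [cont, contD]
  | case2 x =>
    intro v hv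
    obtain ⟨w, s, rfl⟩ : ∃ w s, v = w :: s := by
      cases v with
      | nil => exact absurd rfl hv
      | cons w s => exact ⟨w, s, rfl⟩
    simp [cont, contD]
  | case3 x y t ih1 ih2 =>
    intro v hv
    have h1 := ih1 v hv
    have h2 := ih2 v hv
    simp only [List.cons_append] at *
    rw [show cont (x :: y :: (t ++ v)) = x * cont (y :: (t ++ v)) + cont (t ++ v) from rfl,
      h1, h2]
    simp only [cont, contD]
    ring

lemma tail_le_cont : ∀ l : List ℝ, (∀ x ∈ l, 1 ≤ x) → cont l.tail ≤ cont l := by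
  intro l h
  match l with
  | [] => simp
  | [x] => simpa [cont] using h x (by simp)
  | x :: y :: t =>
    have hx : 1 ≤ x := h x (by simp)
    have h1 : 1 ≤ cont (y :: t) := one_le_cont _ (fun z hz => h z (by simp [hz]))
    have h2 : 1 ≤ cont t := one_le_cont _ (fun z hz => h z (by simp [hz]))
    show cont (y :: t) ≤ x * cont (y :: t) + cont t
    nlinarith

lemma cont_mul_le_append (b c : List ℝ) (hb1 : ∀ x ∈ b, 1 ≤ x) (hc1 : ∀ x ∈ c, 1 ≤ x) :
    cont b * cont c ≤ cont (b ++ c) := by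
  rcases eq_or_ne c [] with rfl | hc
  · simp [cont]
  · rw [euler b c hc]
    have h1 := contD_nonneg b hb1
    have h2 : 1 ≤ cont c.tail := one_le_cont _ (fun z hz => hc1 z (List.mem_of_mem_tail hz))
    nlinarith

theorem continuant_split_ineq_two (a b c : List ℝ) (hb : b ≠ [])
    (ha1 : ∀ x ∈ a, 1 ≤ x) (hb1 : ∀ x ∈ b, 1 ≤ x) (hc1 : ∀ x ∈ c, 1 ≤ x) :
    cont (a ++ b) * cont c ≤ 2 * cont a * cont (b ++ c) := by
  have ha : 1 ≤ cont a := one_le_cont a ha1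
  have hbb : 1 ≤ cont b := one_le_cont b hb1
  have hcc : 1 ≤ cont c := one_le_cont c hc1
  have hDa : contD a ≤ cont a := contD_le_cont a ha1
  have hDa0 : 0 ≤ contD a := contD_nonneg a ha1
  have htb : cont b.tail ≤ cont b := tail_le_cont b hb1
  have htb0 : 1 ≤ cont b.tail := one_le_cont _ (fun z hz => hb1 z (List.mem_of_mem_tail hz))
  have hE := euler a b hb
  have hbc : cont b * cont c ≤ cont (b ++ c) := cont_mul_le_append b c hb1 hc1
  have key : cont (a ++ b) * cont c ≤ 2 * cont a * (cont b * cont c) := by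
    rw [hE]
    have h3 : contD a * cont b.tail ≤ cont a * cont b :=
      mul_le_mul hDa htb (by linarith) (by linarith)
    nlinarith [mul_le_mul_of_nonneg_right h3 (by linarith : (0:ℝ) ≤ cont c)]
  refine key.trans ?_
  nlinarith
end

section
/- Let (k_i)_{i∈ℤ} be a two-sided sequence of positive integers and define w_i = ⟨k_i, k_{i+1}, k_{i+2}, …⟩ as the infinite continued fraction value in (0,1). Then for all integers M < N, the product ∏_{i=M+1}^{N} w_i is at most 1/F_{N-M+1} ≤ (((√5 − 1)/2))^{N-M-1}, where F_j are the Fibonacci numbers with F_1 = F_2 = 1. -/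
open Real Finset

private lemma psi_sq : ((Real.sqrt 5 - 1) / 2) ^ 2 + ((Real.sqrt 5 - 1) / 2) = 1 := by
  have h : Real.sqrt 5 ^ 2 = 5 := Real.sq_sqrt (by norm_num)
  nlinarith [h]

private lemma psi_half : (1:ℝ) / 2 ≤ (Real.sqrt 5 - 1) / 2 := by
  have h : Real.sqrt 5 ^ 2 = 5 := Real.sq_sqrt (by norm_num)
  have h0 : 0 ≤ Real.sqrt 5 := Real.sqrt_nonneg 5
  nlinarith [sq_nonneg (Real.sqrt 5 - 2)]

private lemma psi_pos : (0:ℝ) < (Real.sqrt 5 - 1) / 2 := lt_of_lt_of_le (by norm_num) psi_half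

private lemma fib_psi_bound : ∀ n : ℕ, (1:ℝ) ≤ (Nat.fib (n+2) : ℝ) * ((Real.sqrt 5 - 1) / 2) ^ n := by
  intro n
  induction n using Nat.twoStepInduction with
  | zero => simp
  | one =>
    have := psi_half
    norm_num [Nat.fib]
    linarith
  | more n ih1 ih2 =>
    have hψ := psi_pos
    have h1 : ((Real.sqrt 5 - 1) / 2) ^ 2 ≤ (Nat.fib (n+2) : ℝ) * ((Real.sqrt 5 - 1) / 2) ^ (n+2) := by
      have := mul_le_mul_of_nonneg_right ih1 (le_of_lt (pow_pos hψ 2))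
      calc ((Real.sqrt 5 - 1) / 2) ^ 2 = 1 * ((Real.sqrt 5 - 1) / 2)^2 := by ring
        _ ≤ ((Nat.fib (n+2) : ℝ) * ((Real.sqrt 5 - 1) / 2) ^ n) * ((Real.sqrt 5 - 1) / 2)^2 := this
        _ = (Nat.fib (n+2) : ℝ) * ((Real.sqrt 5 - 1) / 2) ^ (n+2) := by ring
    have h2 : ((Real.sqrt 5 - 1) / 2) ≤ (Nat.fib (n+3) : ℝ) * ((Real.sqrt 5 - 1) / 2) ^ (n+2) := by
      have := mul_le_mul_of_nonneg_right ih2 (le_of_lt hψ)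
      calc ((Real.sqrt 5 - 1) / 2) = 1 * ((Real.sqrt 5 - 1) / 2) := by ring
        _ ≤ ((Nat.fib (n+3) : ℝ) * ((Real.sqrt 5 - 1) / 2) ^ (n+1)) * ((Real.sqrt 5 - 1) / 2) := this
        _ = (Nat.fib (n+3) : ℝ) * ((Real.sqrt 5 - 1) / 2) ^ (n+2) := by ring
    have hfib : (Nat.fib (n+4) : ℝ) = (Nat.fib (n+3) : ℝ) + (Nat.fib (n+2) : ℝ) := by
      have : Nat.fib (n+4) = Nat.fib (n+2) + Nat.fib (n+3) := Nat.fib_add_two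
      rw [this]; push_cast; ring
    calc (1:ℝ) = ((Real.sqrt 5 - 1) / 2) ^ 2 + ((Real.sqrt 5 - 1) / 2) := psi_sq.symm
      _ ≤ (Nat.fib (n+2) : ℝ) * ((Real.sqrt 5 - 1) / 2) ^ (n+2)
          + (Nat.fib (n+3) : ℝ) * ((Real.sqrt 5 - 1) / 2) ^ (n+2) := add_le_add h1 h2
      _ = (Nat.fib (n+4) : ℝ) * ((Real.sqrt 5 - 1) / 2) ^ (n+2) := by rw [hfib]; ring

private lemma cf_prod_aux (k : ℤ → ℕ) (hk : ∀ i, 1 ≤ k i)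
    (w : ℤ → ℝ) (hw : ∀ i, 0 < w i ∧ w i < 1)
    (hrec : ∀ i, w i = 1 / (k i + w (i + 1))) :
    ∀ n : ℕ, ∀ j : ℤ, (∏ i ∈ Finset.Icc j (j + n), w i) ≤
      1 / ((Nat.fib (n+2) : ℝ) + (Nat.fib (n+1) : ℝ) * w (j + n + 1)) := by
  intro n
  induction n with
  | zero =>
    intro j
    simp only [Nat.cast_zero, add_zero, Finset.Icc_self, Finset.prod_singleton]
    rw [hrec j]
    have hk1 : (1:ℝ) ≤ (k j : ℝ) := by exact_mod_cast hk j
    have hw1 := (hw (j+1)).1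
    have hpos : (0:ℝ) < 1 + w (j+1) := by linarith
    have heq : (Nat.fib (0+2) : ℝ) + (Nat.fib (0+1) : ℝ) * w (j + 1) = 1 + w (j+1) := by
      norm_num
    rw [heq]
    apply one_div_le_one_div_of_le hpos
    linarith
  | succ n ih =>
    intro j
    have hins : Finset.Icc j (j + ((n:ℕ)+1 : ℕ)) =
        insert (j + (n:ℤ) + 1) (Finset.Icc j (j + (n:ℤ))) := by
      ext y; simp only [Finset.mem_Icc, Finset.mem_insert]; push_cast; omega
    rw [hins, Finset.prod_insert (by simp [Finset.mem_Icc])]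
    set t := w (j + (n:ℤ) + 1) with htdef
    set x := w (j + (n:ℤ) + 2) with hxdef
    set K := ((k (j + (n:ℤ) + 1)) : ℝ) with hKdef
    have hK1 : (1:ℝ) ≤ K := by rw [hKdef]; exact_mod_cast hk (j + (n:ℤ) + 1)
    have hx : 0 < x := (hw _).1
    have ht : 0 < t := (hw _).1
    have htv : t = 1 / (K + x) := by
      rw [htdef, hrec (j + (n:ℤ) + 1)]
      congr 2
      · rw [hxdef]; congr 1; ring
    have htKx : t * (K + x) = 1 := by
      rw [htv]; field_simp
    have hA : (0:ℝ) < (Nat.fib (n+2) : ℝ) := by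
      exact_mod_cast Nat.fib_pos.mpr (by omega)
    have hB : (0:ℝ) ≤ (Nat.fib (n+1) : ℝ) := by positivity
    have hd1 : (0:ℝ) < (Nat.fib (n+2) : ℝ) + (Nat.fib (n+1) : ℝ) * t := by nlinarith
    have hf : (Nat.fib (n+3) : ℝ) = (Nat.fib (n+2) : ℝ) + (Nat.fib (n+1) : ℝ) := by
      have : Nat.fib (n+3) = Nat.fib (n+1) + Nat.fib (n+2) := Nat.fib_add_two
      rw [this]; push_cast; ring
    have hxgoal : w (j + ((n:ℕ)+1 : ℕ) + 1) = x := by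
      rw [hxdef]; congr 1; push_cast; ring
    have hd2 : (0:ℝ) < (Nat.fib (n+1+2) : ℝ) + (Nat.fib (n+1+1) : ℝ) * x := by
      have : (0:ℝ) < (Nat.fib (n+3) : ℝ) := by exact_mod_cast Nat.fib_pos.mpr (by omega)
      nlinarith
    rw [hxgoal]
    have hP := ih j
    have h1x : t * (1 + x) ≤ 1 := by nlinarith
    calc t * ∏ i ∈ Finset.Icc j (j + (n:ℤ)), w i
        ≤ t * (1 / ((Nat.fib (n+2) : ℝ) + (Nat.fib (n+1) : ℝ) * t)) :=
          mul_le_mul_of_nonneg_left hP ht.le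
      _ = t / ((Nat.fib (n+2) : ℝ) + (Nat.fib (n+1) : ℝ) * t) := by ring
      _ ≤ 1 / ((Nat.fib (n+1+2) : ℝ) + (Nat.fib (n+1+1) : ℝ) * x) := by
          rw [div_le_div_iff₀ hd1 hd2]
          have hf' : (Nat.fib (n+1+2) : ℝ) = (Nat.fib (n+2) : ℝ) + (Nat.fib (n+1) : ℝ) := hf
          rw [hf']
          nlinarith [mul_le_mul_of_nonneg_left h1x hA.le]

/-- Products of forward continued-fraction tails decay at Fibonacci rate.
Here `w i = ⟨k_i, k_{i+1}, k_{i+2}, …⟩` is characterized by `w i ∈ (0,1)` and the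
recursion `w i = 1 / (k i + w (i+1))`. Fibonacci convention `F_1 = F_2 = 1` is `Nat.fib`. -/
theorem cf_tail_product_fib_bound (k : ℤ → ℕ) (hk : ∀ i, 1 ≤ k i)
    (w : ℤ → ℝ) (hw : ∀ i, 0 < w i ∧ w i < 1)
    (hrec : ∀ i, w i = 1 / (k i + w (i + 1)))
    (M N : ℤ) (hMN : M < N) :
    (∏ i ∈ Finset.Icc (M + 1) N, w i) ≤ 1 / (Nat.fib (N - M + 1).toNat : ℝ) ∧
    1 / (Nat.fib (N - M + 1).toNat : ℝ) ≤ ((Real.sqrt 5 - 1) / 2) ^ (N - M - 1).toNat := by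
  set n := (N - M - 1).toNat with hn
  have htn : (N - M + 1).toNat = n + 2 := by omega
  have fibpos : (0:ℝ) < (Nat.fib (n+2) : ℝ) := by
    exact_mod_cast Nat.fib_pos.mpr (by omega)
  constructor
  · have h := cf_prod_aux k hk w hw hrec n (M+1)
    have hIcc : Finset.Icc (M+1) (M+1+(n:ℤ)) = Finset.Icc (M+1) N := by
      congr 1; omega
    rw [hIcc] at h
    refine h.trans ?_
    rw [htn]
    apply one_div_le_one_div_of_le fibpos
    have hwpos := (hw (M+1+(n:ℤ)+1)).1
    have hB : (0:ℝ) ≤ (Nat.fib (n+1) : ℝ) := by positivity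
    nlinarith
  · rw [htn]
    have hb := fib_psi_bound n
    rw [div_le_iff₀ fibpos]
    calc (1:ℝ) ≤ (Nat.fib (n+2) : ℝ) * ((Real.sqrt 5 - 1) / 2) ^ n := hb
      _ = ((Real.sqrt 5 - 1) / 2) ^ n * (Nat.fib (n+2) : ℝ) := by ring
end

section
/- Let (k_i)_{i∈ℤ} be a two-sided sequence of positive integers, and set v_i = ⟨k_i, k_{i-1}, k_{i-2}, …⟩ and w_i = ⟨k_i, k_{i+1}, k_{i+2}, …⟩ (infinite continued fractions). Then for all integers M < N: 1/2 ≤ ∏_{i=M+1}^{N} (v_i / w_i) ≤ 2. -/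
lemma Icc_int_insert_top (a b : ℤ) (h : a ≤ b + 1) :
    Finset.Icc a (b + 1) = insert (b + 1) (Finset.Icc a b) := by
  ext x
  simp only [Finset.mem_Icc, Finset.mem_insert]
  omega

/-- The product of ratios of backward and forward continued fraction values is
between 1/2 and 2. Here `v i = ⟨k_i, k_{i-1}, …⟩` and `w i = ⟨k_i, k_{i+1}, …⟩`
are characterized by lying in `(0,1)` and the recursions
`v i = 1 / (k i + v (i-1))`, `w i = 1 / (k i + w (i+1))`. -/
theorem cf_ratio_product_bound (k : ℤ → ℕ) (hk : ∀ i, 1 ≤ k i)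
    (v w : ℤ → ℝ)
    (hv : ∀ i, 0 < v i ∧ v i < 1) (hw : ∀ i, 0 < w i ∧ w i < 1)
    (hvrec : ∀ i, v i = 1 / (k i + v (i - 1)))
    (hwrec : ∀ i, w i = 1 / (k i + w (i + 1)))
    (M N : ℤ) (hMN : M < N) :
    1 / 2 ≤ (∏ i ∈ Finset.Icc (M + 1) N, v i / w i) ∧
    (∏ i ∈ Finset.Icc (M + 1) N, v i / w i) ≤ 2 := by
  have hk' : ∀ i, (1 : ℝ) ≤ (k i : ℝ) := fun i => by exact_mod_cast hk i
  -- Key invariant: continuant-matrix description of the partial products.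
  have key : ∀ N : ℤ, M + 1 ≤ N → ∃ A B C D : ℝ,
      0 < A ∧ 0 ≤ B ∧ B ≤ A ∧ 0 ≤ D ∧ D ≤ C ∧ C ≤ A ∧
      (∏ i ∈ Finset.Icc (M + 1) N, v i) = 1 / (A + B * v M) ∧
      v N = (C + D * v M) / (A + B * v M) ∧
      (∏ i ∈ Finset.Icc (M + 1) N, w i) = 1 / (A + C * w (N + 1)) := by
    refine Int.le_induction ?_ ?_
    ·
      refine ⟨(k (M + 1) : ℝ), 1, 1, 0, ?_, by norm_num, hk' _, le_refl _, by norm_num,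
        hk' _, ?_, ?_, ?_⟩
      · linarith [hk' (M + 1)]
      · rw [Finset.Icc_self, Finset.prod_singleton, hvrec (M + 1)]
        norm_num
      · rw [hvrec (M + 1)]
        norm_num
      · rw [Finset.Icc_self, Finset.prod_singleton, hwrec (M + 1)]
        norm_num
    · intro n hn ih
      obtain ⟨A, B, C, D, hA, hB0, hBA, hD0, hDC, hCA, hpv, hvN, hpw⟩ := ih
      set κ : ℝ := (k (n + 1) : ℝ) with hκ
      have hκ1 : (1 : ℝ) ≤ κ := hk' (n + 1)
      have hC0 : 0 ≤ C := le_trans hD0 hDC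
      have hvM : 0 < v M := (hv M).1
      have hvn : 0 < v n := (hv n).1
      have hwn2 : 0 < w (n + 1 + 1) := (hw (n + 1 + 1)).1
      have hden : 0 < A + B * v M := by positivity
      have hnum : 0 ≤ C + D * v M := by positivity
      refine ⟨κ * A + C, κ * B + D, A, B, ?_, ?_, ?_, hB0, hBA, ?_, ?_, ?_, ?_⟩
      · nlinarith
      · positivity
      · nlinarith
      · nlinarith
      -- product of v's
      · rw [Icc_int_insert_top (M + 1) n (by omega),
          Finset.prod_insert (by simp), hpv]
        have hvrec' : v (n + 1) = 1 / (κ + v n) := by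
          have := hvrec (n + 1); simpa using this
        rw [hvrec', hvN]
        have hκvn : 0 < κ + v n := by positivity
        have hd2 : (0:ℝ) < κ * (A + B * v M) + (C + D * v M) := by nlinarith
        rw [hvN] at hκvn
        field_simp
        ring
      -- value of v (n+1)
      · have hvrec' : v (n + 1) = 1 / (κ + v n) := by
          have := hvrec (n + 1); simpa using this
        rw [hvrec', hvN]
        have hκvn : 0 < κ + v n := by positivity
        have hcomb : κ + (C + D * v M) / (A + B * v M)
            = (κ * A + C + (κ * B + D) * v M) / (A + B * v M) := by
          field_simp
          ring
        rw [hcomb, one_div_div]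
      -- product of w's
      · rw [Icc_int_insert_top (M + 1) n (by omega),
          Finset.prod_insert (by simp), hpw]
        have hwrec' : w (n + 1) = 1 / (κ + w (n + 1 + 1)) := by
          have := hwrec (n + 1); simpa using this
        rw [hwrec']
        have h1 : 0 < κ + w (n + 1 + 1) := by positivity
        have h2 : 0 < A + C * w (n + 1) := by
          have := (hw (n + 1)).1; positivity
        rw [hwrec'] at h2
        field_simp
        ring
  obtain ⟨A, B, C, D, hA, hB0, hBA, hD0, hDC, hCA, hpv, hvN, hpw⟩ := key N (by omega)
  have hC0 : 0 ≤ C := le_trans hD0 hDC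
  have hvM0 : 0 < v M := (hv M).1
  have hvM1 : v M < 1 := (hv M).2
  have hwN0 : 0 < w (N + 1) := (hw (N + 1)).1
  have hwN1 : w (N + 1) < 1 := (hw (N + 1)).2
  have hdv : 0 < A + B * v M := by positivity
  have hdw : 0 < A + C * w (N + 1) := by positivity
  have hwprod : (∏ i ∈ Finset.Icc (M + 1) N, w i) ≠ 0 := by
    rw [hpw]; positivity
  have hsplit : (∏ i ∈ Finset.Icc (M + 1) N, v i / w i)
      = (∏ i ∈ Finset.Icc (M + 1) N, v i) / (∏ i ∈ Finset.Icc (M + 1) N, w i) := by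
    rw [Finset.prod_div_distrib]
  have heq : 1 / (A + B * v M) / (1 / (A + C * w (N + 1)))
      = (A + C * w (N + 1)) / (A + B * v M) := by
    field_simp
  rw [hsplit, hpv, hpw, heq]
  have hv2 : A + B * v M ≤ 2 * A := by nlinarith
  have hw2 : A + C * w (N + 1) ≤ 2 * A := by nlinarith
  have hvge : A ≤ A + B * v M := by nlinarith
  have hwge : A ≤ A + C * w (N + 1) := by nlinarith
  constructor
  · rw [le_div_iff₀ hdv]; linarith
  · rw [div_le_iff₀ hdv]; linarith
end

section
/- Let w ∈ (0,1) be irrational, and for an integer r with 1 ≤ r ≤ ⌊1/w⌋ define A_2(w,r) = (1 + w·r)·log 2 − (2+w)·log(1 + 1/w) + ∑_{k=1}^{r-1} ((2k−1)w − 2)·log(1 + w/(1−k·w)). Then −8·log(1 + 1/w) ≤ A_2(w,r) ≤ 0. -/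
set_option maxHeartbeats 800000

theorem A2_bounds (w : ℝ) (hirr : Irrational w) (h0 : 0 < w) (h1 : w < 1)
    (r : ℕ) (hr1 : 1 ≤ r) (hr2 : r ≤ ⌊1 / w⌋₊) :
    -8 * Real.log (1 + 1 / w) ≤
      (1 + w * r) * Real.log 2 - (2 + w) * Real.log (1 + 1 / w)
        + ∑ k ∈ Finset.Icc 1 (r - 1),
            ((2 * (k : ℝ) - 1) * w - 2) * Real.log (1 + w / (1 - (k : ℝ) * w)) ∧
    (1 + w * r) * Real.log 2 - (2 + w) * Real.log (1 + 1 / w)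
        + ∑ k ∈ Finset.Icc 1 (r - 1),
            ((2 * (k : ℝ) - 1) * w - 2) * Real.log (1 + w / (1 - (k : ℝ) * w)) ≤ 0 := by
  have hw0 : (0:ℝ) < 1 / w := by positivity
  have hirr' : Irrational (1 / w) := by simpa [one_div] using hirr.inv
  have hfl : ((⌊1 / w⌋₊ : ℕ) : ℝ) < 1 / w :=
    lt_of_le_of_ne (Nat.floor_le hw0.le) (fun h => hirr'.ne_nat _ h.symm)
  have hrlt : (r : ℝ) < 1 / w := (Nat.cast_le.mpr hr2).trans_lt hfl
  have hrw : (r : ℝ) * w < 1 := by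
    have := (lt_div_iff₀ h0).mp hrlt
    linarith
  have hr1' : (1:ℝ) ≤ (r:ℝ) := by exact_mod_cast hr1
  have hkle : ∀ k ∈ Finset.Icc 1 (r - 1), (k:ℝ) * w ≤ (r:ℝ) * w - w := by
    intro k hk
    obtain ⟨hk1, hk2⟩ := Finset.mem_Icc.mp hk
    have hkr : (k:ℝ) ≤ (r:ℝ) - 1 := by
      have : k + 1 ≤ r := by omega
      have h := (Nat.cast_le (α := ℝ)).mpr this
      push_cast at h; linarith
    nlinarith
  have hc : 0 < Real.log (1 + 1 / w) := Real.log_pos (by linarith)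
  have h1w : 1 < 1 / w := by
    rw [lt_div_iff₀ h0]; linarith
  have hlog2 : Real.log 2 ≤ Real.log (1 + 1 / w) :=
    Real.log_le_log (by norm_num) (by linarith)
  have hlog2pos : 0 < Real.log 2 := Real.log_pos (by norm_num)
  have hlogw : -Real.log (1 + 1 / w) ≤ Real.log w := by
    have h := Real.log_le_log hw0 (by linarith : 1 / w ≤ 1 + 1 / w)
    rw [Real.log_div one_ne_zero h0.ne', Real.log_one] at h
    linarith
  set T := ∑ k ∈ Finset.Icc 1 (r - 1), Real.log (1 + w / (1 - (k:ℝ) * w)) with hT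
  have hTval : T = -Real.log (1 - ((r:ℝ) - 1) * w) := by
    have hcongr : ∀ k ∈ Finset.Icc 1 (r - 1),
        Real.log (1 + w / (1 - (k:ℝ) * w))
          = Real.log (1 - ((k:ℝ) - 1) * w) - Real.log (1 - (k:ℝ) * w) := by
      intro k hk
      have hkw := hkle k hk
      have hpos : 0 < 1 - (k:ℝ) * w := by linarith
      have hpos' : 0 < 1 - ((k:ℝ) - 1) * w := by nlinarith
      rw [← Real.log_div hpos'.ne' hpos.ne']
      congr 1
      rw [eq_div_iff hpos.ne', add_mul, div_mul_cancel₀ _ hpos.ne']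
      ring
    have hIcc : Finset.Icc 1 (r - 1) = Finset.Ico 1 r := by
      rw [← Finset.Ico_add_one_right_eq_Icc]
      congr 1
      omega
    rw [hT, Finset.sum_congr rfl hcongr, hIcc, Finset.sum_Ico_eq_sum_range]
    have hstep : ∀ i ∈ Finset.range (r - 1),
        Real.log (1 - (((1 + i : ℕ):ℝ) - 1) * w) - Real.log (1 - ((1 + i : ℕ):ℝ) * w)
          = (fun j : ℕ => Real.log (1 - (j:ℝ) * w)) i
            - (fun j : ℕ => Real.log (1 - (j:ℝ) * w)) (i + 1) := by
      intro i _
      push_cast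
      ring_nf
    rw [Finset.sum_congr rfl hstep, Finset.sum_range_sub']
    have hcast : (((r - 1 : ℕ)) : ℝ) = (r:ℝ) - 1 := by
      push_cast [Nat.cast_sub hr1]; ring
    simp [hcast]
  have hterm : ∀ k ∈ Finset.Icc 1 (r - 1),
      0 ≤ Real.log (1 + w / (1 - (k:ℝ) * w)) ∧
      -2 ≤ (2 * (k:ℝ) - 1) * w - 2 ∧ (2 * (k:ℝ) - 1) * w - 2 ≤ 0 := by
    intro k hk
    have hkw := hkle k hk
    have hk1 : 1 ≤ k := (Finset.mem_Icc.mp hk).1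
    have hk1' : (1:ℝ) ≤ (k:ℝ) := by exact_mod_cast hk1
    have hpos : 0 < 1 - (k:ℝ) * w := by linarith
    have hdiv : 0 ≤ w / (1 - (k:ℝ) * w) := div_nonneg h0.le hpos.le
    exact ⟨Real.log_nonneg (by linarith), by nlinarith, by nlinarith⟩
  set S := ∑ k ∈ Finset.Icc 1 (r - 1),
      ((2 * (k:ℝ) - 1) * w - 2) * Real.log (1 + w / (1 - (k:ℝ) * w)) with hS
  have hSle : S ≤ 0 := by
    refine Finset.sum_nonpos fun k hk => ?_
    obtain ⟨hL, _, hcoef⟩ := hterm k hk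
    nlinarith
  have hSge : -2 * T ≤ S := by
    rw [hT, hS, Finset.mul_sum]
    refine Finset.sum_le_sum fun k hk => ?_
    obtain ⟨hL, hcoef, _⟩ := hterm k hk
    exact mul_le_mul_of_nonneg_right hcoef hL
  have hrw' : w ≤ 1 - ((r:ℝ) - 1) * w := by nlinarith
  have hlogr : Real.log w ≤ Real.log (1 - ((r:ℝ) - 1) * w) := Real.log_le_log h0 hrw'
  have hTle : T ≤ Real.log (1 + 1 / w) := by rw [hTval]; linarith
  have hp1 : 0 ≤ (1 - w * (r:ℝ)) * Real.log 2 :=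
    mul_nonneg (by nlinarith) hlog2pos.le
  have hp2 : 0 ≤ w * Real.log (1 + 1 / w) := mul_nonneg h0.le hc.le
  have hp3 : 0 ≤ (1 + w * (r:ℝ)) * Real.log 2 :=
    mul_nonneg (by nlinarith [mul_nonneg h0.le (Nat.cast_nonneg r : (0:ℝ) ≤ r)]) hlog2pos.le
  have hp4 : 0 ≤ (1 - w) * Real.log (1 + 1 / w) := mul_nonneg (by linarith) hc.le
  constructor
  · nlinarith
  · nlinarith
end

section
/- Let w ∈ (0,1) be irrational and 1 ≤ r ≤ ⌊1/w⌋ an integer. Define A_1(w,r) = (2r−1+wr−w)·log 2 − (2r−1+wr+w)·log(1+1/w) + ∑_{k=1}^{r-1}(1+2k−2k²w−w)·log(1+w/(1−kw)) + r·∑_{k=1}^{r-1}((2k−1)w−2)·log(1+w/(1−kw)), and A_2(w,r) = (1+wr)·log 2 − (2+w)·log(1+1/w) + ∑_{k=1}^{r-1}((2k−1)w−2)·log(1+w/(1−kw)). Then 0 ≤ A_1(w,r) − r·A_2(w,r) + log 2 ≤ 6/w. -/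
set_option maxHeartbeats 1000000


theorem A1_minus_r_A2_bounds (w : ℝ) (hirr : Irrational w) (h0 : 0 < w) (h1 : w < 1)
    (r : ℕ) (hr1 : 1 ≤ r) (hr2 : r ≤ ⌊1 / w⌋₊) :
    0 ≤
      ((2 * (r : ℝ) - 1 + w * r - w) * Real.log 2
          - (2 * (r : ℝ) - 1 + w * r + w) * Real.log (1 + 1 / w)
          + ∑ k ∈ Finset.Icc 1 (r - 1),
              (1 + 2 * (k : ℝ) - 2 * (k : ℝ)^2 * w - w) * Real.log (1 + w / (1 - (k : ℝ) * w))
          + (r : ℝ) * ∑ k ∈ Finset.Icc 1 (r - 1),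
              ((2 * (k : ℝ) - 1) * w - 2) * Real.log (1 + w / (1 - (k : ℝ) * w)))
        - (r : ℝ) * ((1 + w * r) * Real.log 2 - (2 + w) * Real.log (1 + 1 / w)
          + ∑ k ∈ Finset.Icc 1 (r - 1),
              ((2 * (k : ℝ) - 1) * w - 2) * Real.log (1 + w / (1 - (k : ℝ) * w)))
        + Real.log 2 ∧
    ((2 * (r : ℝ) - 1 + w * r - w) * Real.log 2
          - (2 * (r : ℝ) - 1 + w * r + w) * Real.log (1 + 1 / w)
          + ∑ k ∈ Finset.Icc 1 (r - 1),
              (1 + 2 * (k : ℝ) - 2 * (k : ℝ)^2 * w - w) * Real.log (1 + w / (1 - (k : ℝ) * w))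
          + (r : ℝ) * ∑ k ∈ Finset.Icc 1 (r - 1),
              ((2 * (k : ℝ) - 1) * w - 2) * Real.log (1 + w / (1 - (k : ℝ) * w)))
        - (r : ℝ) * ((1 + w * r) * Real.log 2 - (2 + w) * Real.log (1 + 1 / w)
          + ∑ k ∈ Finset.Icc 1 (r - 1),
              ((2 * (k : ℝ) - 1) * w - 2) * Real.log (1 + w / (1 - (k : ℝ) * w)))
        + Real.log 2 ≤ 6 / w := by
  have hw0 : (0:ℝ) < w := h0
  have hr1' : (1:ℝ) ≤ (r:ℝ) := by exact_mod_cast hr1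
  have hrw : (r:ℝ) * w ≤ 1 := by
    have h : (r:ℝ) ≤ 1 / w := le_trans (by exact_mod_cast hr2) (Nat.floor_le (by positivity))
    have := mul_le_mul_of_nonneg_right h hw0.le
    rwa [one_div, inv_mul_cancel₀ (ne_of_gt hw0)] at this
  have hrinv : (r:ℝ) ≤ 1 / w := by
    rw [le_div_iff₀ hw0]; exact hrw
  -- facts about each k in the sum
  have hkw : ∀ k ∈ Finset.Icc 1 (r-1), (k:ℝ) * w ≤ 1 - w := by
    intro k hk
    simp only [Finset.mem_Icc] at hk
    have hkr : (k:ℝ) ≤ (r:ℝ) - 1 := by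
      have : (k:ℝ) ≤ ((r-1 : ℕ):ℝ) := by exact_mod_cast hk.2
      rwa [Nat.cast_sub hr1, Nat.cast_one] at this
    nlinarith [hk.1, hrw]
  have hk1 : ∀ k ∈ Finset.Icc 1 (r-1), (1:ℝ) ≤ (k:ℝ) := by
    intro k hk
    simp only [Finset.mem_Icc] at hk
    exact_mod_cast hk.1
  -- positivity of denominators and log arguments
  have hden : ∀ k ∈ Finset.Icc 1 (r-1), (0:ℝ) < 1 - (k:ℝ) * w := by
    intro k hk; have := hkw k hk; linarith
  have hSnn : ∀ k ∈ Finset.Icc 1 (r-1), 0 ≤ Real.log (1 + w / (1 - (k:ℝ) * w)) := by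
    intro k hk
    apply Real.log_nonneg
    have := div_nonneg hw0.le (hden k hk).le
    linarith
  have hcnn : ∀ k ∈ Finset.Icc 1 (r-1), 0 ≤ 1 + 2 * (k:ℝ) - 2 * (k:ℝ)^2 * w - w := by
    intro k hk
    have h1k := hk1 k hk
    have h2 := hkw k hk
    nlinarith [mul_nonneg (by linarith : (0:ℝ) ≤ (k:ℝ)) (by linarith : (0:ℝ) ≤ 1 - (k:ℝ)*w)]
  have hlog2nn : (0:ℝ) ≤ Real.log 2 := Real.log_nonneg (by norm_num)
  have hlog2le : Real.log 2 ≤ 1 := by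
    have := Real.log_le_sub_one_of_pos (by norm_num : (0:ℝ) < 2)
    linarith
  have hLnn : (0:ℝ) ≤ Real.log (1 + 1/w) := by
    apply Real.log_nonneg
    have : (0:ℝ) < 1/w := by positivity
    linarith
  have hLle : Real.log (1 + 1/w) ≤ 1/w := by
    have := Real.log_le_sub_one_of_pos (by positivity : (0:ℝ) < 1 + 1/w)
    linarith
  have hcoef : (0:ℝ) ≤ (r:ℝ) + w * (r:ℝ) - w - w * (r:ℝ)^2 := by
    nlinarith [mul_nonneg (by linarith : (0:ℝ) ≤ (r:ℝ)) (by nlinarith : (0:ℝ) ≤ 1 - w * (r:ℝ)),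
      mul_nonneg hw0.le (by linarith : (0:ℝ) ≤ (r:ℝ) - 1)]
  set L := Real.log (1 + 1/w) with hL
  set T1 := ∑ k ∈ Finset.Icc 1 (r-1),
      (1 + 2 * (k : ℝ) - 2 * (k : ℝ)^2 * w - w) * Real.log (1 + w / (1 - (k : ℝ) * w)) with hT1
  set T2 := ∑ k ∈ Finset.Icc 1 (r-1),
      ((2 * (k : ℝ) - 1) * w - 2) * Real.log (1 + w / (1 - (k : ℝ) * w)) with hT2
  have key : ((2 * (r : ℝ) - 1 + w * r - w) * Real.log 2
          - (2 * (r : ℝ) - 1 + w * r + w) * L + T1 + (r : ℝ) * T2)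
        - (r : ℝ) * ((1 + w * r) * Real.log 2 - (2 + w) * L + T2)
        + Real.log 2
      = ((r:ℝ) + w * (r:ℝ) - w - w * (r:ℝ)^2) * Real.log 2 + (1 - w) * L + T1 := by
    ring
  rw [key]
  have hT1nn : 0 ≤ T1 := by
    rw [hT1]
    apply Finset.sum_nonneg
    intro k hk
    exact mul_nonneg (hcnn k hk) (hSnn k hk)
  constructor
  · have h2 : 0 ≤ (1 - w) * L := mul_nonneg (by linarith) hLnn
    have h3 : 0 ≤ ((r:ℝ) + w * (r:ℝ) - w - w * (r:ℝ)^2) * Real.log 2 :=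
      mul_nonneg hcoef hlog2nn
    linarith
  · -- upper bound
    have hterm1 : ((r:ℝ) + w * (r:ℝ) - w - w * (r:ℝ)^2) * Real.log 2 ≤ 2 / w := by
      have h1' : ((r:ℝ) + w * (r:ℝ) - w - w * (r:ℝ)^2) * Real.log 2
          ≤ ((r:ℝ) + w * (r:ℝ) - w - w * (r:ℝ)^2) * 1 :=
        mul_le_mul_of_nonneg_left hlog2le hcoef
      have h2' : (r:ℝ) + w * (r:ℝ) - w - w * (r:ℝ)^2 ≤ 2 * (r:ℝ) := by
        linarith [mul_nonneg hw0.le (sq_nonneg (r:ℝ)), hrw]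
      have h3' : 2 * (r:ℝ) ≤ 2 / w := by
        rw [le_div_iff₀ hw0]; nlinarith
      linarith
    have hterm2 : (1 - w) * L ≤ 1 / w := by
      have : (1 - w) * L ≤ 1 * L := mul_le_mul_of_nonneg_right (by linarith) hLnn
      calc (1 - w) * L ≤ 1 * L := this
        _ = L := one_mul L
        _ ≤ 1 / w := hLle
    have hterm3 : T1 ≤ 3 / w := by
      have hbound : ∀ k ∈ Finset.Icc 1 (r-1),
          (1 + 2 * (k : ℝ) - 2 * (k : ℝ)^2 * w - w) * Real.log (1 + w / (1 - (k : ℝ) * w))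
            ≤ 3 := by
        intro k hk
        have hd := hden k hk
        have h1k := hk1 k hk
        have h2 := hkw k hk
        have hSle : Real.log (1 + w / (1 - (k:ℝ) * w)) ≤ w / (1 - (k:ℝ) * w) := by
          have := Real.log_le_sub_one_of_pos
            (by positivity : (0:ℝ) < 1 + w / (1 - (k:ℝ) * w))
          linarith
        have hstep : (1 + 2 * (k : ℝ) - 2 * (k : ℝ)^2 * w - w) * Real.log (1 + w / (1 - (k : ℝ) * w))
            ≤ (1 + 2 * (k : ℝ) - 2 * (k : ℝ)^2 * w - w) * (w / (1 - (k:ℝ) * w)) :=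
          mul_le_mul_of_nonneg_left hSle (hcnn k hk)
        have hfinal : (1 + 2 * (k : ℝ) - 2 * (k : ℝ)^2 * w - w) * (w / (1 - (k:ℝ) * w)) ≤ 3 := by
          rw [show (1 + 2 * (k : ℝ) - 2 * (k : ℝ)^2 * w - w) * (w / (1 - (k:ℝ) * w))
              = ((1 + 2 * (k : ℝ) - 2 * (k : ℝ)^2 * w - w) * w) / (1 - (k:ℝ) * w) by ring,
            div_le_iff₀ hd]
          have e1 : w * (3 - 2*((k:ℝ)*w)) ≤ (1 - (k:ℝ)*w) * (3 - 2*((k:ℝ)*w)) :=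
            mul_le_mul_of_nonneg_right (by linarith) (by linarith)
          have e2 : ((k:ℝ)*w)*w ≤ (1-w)*w :=
            mul_le_mul_of_nonneg_right h2 hw0.le
          nlinarith [e1, e2, sq_nonneg w]
        linarith
      calc T1 ≤ ∑ k ∈ Finset.Icc 1 (r-1), (3:ℝ) := Finset.sum_le_sum hbound
        _ = (Finset.Icc 1 (r-1)).card * 3 := by
            rw [Finset.sum_const, nsmul_eq_mul]
        _ ≤ 3 / w := by
            rw [Nat.card_Icc]
            have hcard : ((r - 1 + 1 - 1 : ℕ):ℝ) ≤ (r:ℝ) := by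
              have : (r - 1 + 1 - 1 : ℕ) ≤ r := by omega
              exact_mod_cast this
            have : 3 * (r:ℝ) ≤ 3 / w := by
              rw [le_div_iff₀ hw0]; nlinarith
            nlinarith
    have : 2/w + 1/w + 3/w = 6/w := by ring
    linarith
end

section
/- Define the Gauss map G(x) = 1/x − ⌊1/x⌋ on (0,1)∖ℚ, and the epoch map Q_R on (0,∞)∖ℚ by Q_R(w) = 1/w − 1 if w < 1 and Q_R(w) = w − 1 if w > 1. Then for every irrational w ∈ (0,1), the ⌊1/w⌋-fold iterate of Q_R applied to w equals G(w); moreover, for each integer 1 ≤ r ≤ ⌊1/w⌋, Q_R^r(w) = 1/w − r. -/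
/-- The Gauss map `G(x) = 1/x − ⌊1/x⌋`. -/
noncomputable def gaussMap (x : ℝ) : ℝ := 1 / x - ⌊1 / x⌋

/-- The epoch map `Q_R(w) = 1/w − 1` if `w < 1`, `w − 1` if `w > 1`. -/
noncomputable def QR (w : ℝ) : ℝ := if w < 1 then 1 / w - 1 else w - 1

theorem epoch_iterates_and_gauss (w : ℝ) (hirr : Irrational w)
    (h0 : 0 < w) (h1 : w < 1) :
    (∀ r : ℕ, 1 ≤ r → r ≤ ⌊1 / w⌋₊ → QR^[r] w = 1 / w - r) ∧
    QR^[⌊1 / w⌋₊] w = gaussMap w := by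
  have hinv : (1:ℝ) < 1 / w := by rw [lt_div_iff₀ h0]; linarith
  have hirr' : Irrational (1 / w) := by
    simpa [one_div] using hirr.inv
  have hfloor : ∀ r : ℕ, (r : ℝ) < 1 / w → r ≤ ⌊1 / w⌋₊ := fun r hr =>
    Nat.le_floor hr.le
  have hlt : ∀ r : ℕ, r ≤ ⌊1 / w⌋₊ → (r : ℝ) < 1 / w := by
    intro r hr
    have h2 : (⌊1 / w⌋₊ : ℝ) ≤ 1 / w := Nat.floor_le (by linarith)
    have hne : (1 : ℝ) / w ≠ (⌊1 / w⌋₊ : ℝ) := fun h => by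
      exact hirr' (⟨(⌊1 / w⌋₊ : ℚ), by push_cast; exact h.symm⟩)
    have : (r : ℝ) ≤ ⌊1 / w⌋₊ := by exact_mod_cast hr
    rcases lt_or_eq_of_le h2 with h | h
    · linarith
    · exact absurd h.symm hne
  have key : ∀ r : ℕ, 1 ≤ r → r ≤ ⌊1 / w⌋₊ → QR^[r] w = 1 / w - r := by
    intro r
    induction r with
    | zero => intro h; omega
    | succ n ih =>
      intro _ hle
      rcases Nat.eq_zero_or_pos n with hn | hn
      · subst hn
        simp [QR, h1]
      · have hnle : n ≤ ⌊1 / w⌋₊ := le_trans (Nat.le_succ n) hle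
        have hprev := ih hn hnle
        rw [Function.iterate_succ_apply', hprev]
        have hgt : (1:ℝ) < 1 / w - n := by
          have := hlt (n + 1) hle
          push_cast at this
          linarith
        have : ¬ (1 / w - (n:ℝ) < 1) := by linarith
        rw [QR, if_neg this]
        push_cast
        ring
  refine ⟨key, ?_⟩
  have hpos : 1 ≤ ⌊1 / w⌋₊ := hfloor 1 (by exact_mod_cast hinv)
  rw [key _ hpos le_rfl, gaussMap]
  congr 1
  exact_mod_cast (Int.natCast_floor_eq_floor (by linarith : (0:ℝ) ≤ 1 / w))
end

section
/- Fix an integer d ≥ 1, a nonempty open set F ⊆ ℝ^d, continuous maps Π_j: F → ℝ^d for j ≥ 1, a map Q: F → ℝ^d, and functions Err, Lip: {(δ,f) ∈ [0,∞)×F : closed ball B[δ,f] ⊆ F} → [0,∞) such that for all such (δ,f): sup_{j≥1} sup_{g ∈ B[δ,f]} ‖Π_j(g) − Q(g)‖ ≤ Err(δ,f), and Q is Lipschitz on B[δ,f] with constant Lip(δ,f). Let (δ_j, f_j)_{j≥0} be a sequence with B[δ_j, f_j] ⊆ F, f_{j-1} = Q(f_j) for all j ≥ 1, and ∑_{n=j+1}^{∞}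 (∏_{k=j+1}^{n-1} Lip(δ_k, f_k)) · Err(δ_n, f_n) ≤ δ_j for all j ≥ 0. Then there exists a sequence (g_j)_{j≥0} with g_j ∈ B[δ_j, f_j] and g_{j-1} = Π_j(g_j) for all j ≥ 1. -/
open Metric

/-- Abstract shadowing / semi-global existence theorem (Proposition 5.1):
an exact backward orbit of the approximate maps `T j` exists near any backward
orbit of the model map `Q`, provided the summed propagated errors fit inside
the prescribed tubes.  The summability condition is expressed through all its
partial sums (the terms are nonnegative). -/
theorem abstract_shadowing
    (d : ℕ) (hd : 1 ≤ d)
    (F : Set (EuclideanSpace ℝ (Fin d))) (hFopen : IsOpen F) (hFne : F.Nonempty)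
    (T : ℕ → EuclideanSpace ℝ (Fin d) → EuclideanSpace ℝ (Fin d))
    (hTcont : ∀ j, 1 ≤ j → ContinuousOn (T j) F)
    (Q : EuclideanSpace ℝ (Fin d) → EuclideanSpace ℝ (Fin d))
    (Err Lip : ℝ → EuclideanSpace ℝ (Fin d) → ℝ)
    (hErr_nonneg : ∀ δ f, 0 ≤ δ → closedBall f δ ⊆ F → 0 ≤ Err δ f)
    (hLip_nonneg : ∀ δ f, 0 ≤ δ → closedBall f δ ⊆ F → 0 ≤ Lip δ f)
    (hErr : ∀ δ f, 0 ≤ δ → closedBall f δ ⊆ F →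
      ∀ j, 1 ≤ j → ∀ g ∈ closedBall f δ, ‖T j g - Q g‖ ≤ Err δ f)
    (hLip : ∀ δ f, 0 ≤ δ → closedBall f δ ⊆ F →
      ∀ g ∈ closedBall f δ, ∀ g' ∈ closedBall f δ, ‖Q g - Q g'‖ ≤ Lip δ f * ‖g - g'‖)
    (δ : ℕ → ℝ) (f : ℕ → EuclideanSpace ℝ (Fin d))
    (hδ : ∀ j, 0 ≤ δ j)
    (hball : ∀ j, closedBall (f j) (δ j) ⊆ F)
    (horbit : ∀ j, 1 ≤ j → f (j - 1) = Q (f j))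
    (hsum : ∀ j m : ℕ,
      (∑ n ∈ Finset.Ioc j m,
        (∏ k ∈ Finset.Ico (j + 1) n, Lip (δ k) (f k)) * Err (δ n) (f n)) ≤ δ j) :
    ∃ g : ℕ → EuclideanSpace ℝ (Fin d),
      (∀ j, g j ∈ closedBall (f j) (δ j)) ∧
      ∀ j, 1 ≤ j → g (j - 1) = T j (g j) := by
  classical
  -- backward iterates of the approximate maps, started at `f m`
  let h : ℕ → ℕ → EuclideanSpace ℝ (Fin d) := fun m i =>
    Nat.rec (f m) (fun i x => T (m - i) x) i
  have hh0 : ∀ m, h m 0 = f m := fun m => rfl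
  have hhs : ∀ m i, h m (i + 1) = T (m - i) (h m i) := fun m i => rfl
  -- the propagated error sums
  let S : ℕ → ℕ → ℝ := fun m j =>
    ∑ n ∈ Finset.Ioc j m, (∏ k ∈ Finset.Ico (j + 1) n, Lip (δ k) (f k)) * Err (δ n) (f n)
  have hS_le : ∀ m j, S m j ≤ δ j := fun m j => hsum j m
  have hS_rec : ∀ m j, j < m →
      S m j = Err (δ (j+1)) (f (j+1)) + Lip (δ (j+1)) (f (j+1)) * S m (j+1) := by
    intro m j hjm
    have hins : Finset.Ioc j m = insert (j+1) (Finset.Ioc (j+1) m) := by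
      ext x; simp only [Finset.mem_Ioc, Finset.mem_insert]; omega
    show S m j = _
    rw [show S m j = ∑ n ∈ Finset.Ioc j m,
        (∏ k ∈ Finset.Ico (j + 1) n, Lip (δ k) (f k)) * Err (δ n) (f n) from rfl,
      hins, Finset.sum_insert (by simp)]
    congr 1
    · simp
    · rw [Finset.mul_sum]
      refine Finset.sum_congr rfl fun n hn => ?_
      have hn' : j + 1 < n := (Finset.mem_Ioc.mp hn).1
      rw [Finset.prod_eq_prod_Ico_succ_bot hn', mul_assoc]
  -- the key error estimate along the backward orbit
  have hbound : ∀ m i j, i + j = m → ‖h m i - f j‖ ≤ S m j := by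
    intro m i
    induction i with
    | zero =>
      intro j hj
      have : j = m := by omega
      subst this
      simp [hh0, S]
    | succ i ih =>
      intro j hj
      have hIH := ih (j+1) (by omega)
      have hS1 : S m (j+1) ≤ δ (j+1) := hS_le m (j+1)
      have hx : h m i ∈ closedBall (f (j+1)) (δ (j+1)) := by
        rw [mem_closedBall, dist_eq_norm]; exact hIH.trans hS1
      have hmi : m - i = j + 1 := by omega
      have hfq : f j = Q (f (j+1)) := by
        have := horbit (j+1) (by omega); simpa using this
      have h1 : ‖T (j+1) (h m i) - Q (h m i)‖ ≤ Err (δ (j+1)) (f (j+1)) :=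
        hErr _ _ (hδ _) (hball _) (j+1) (by omega) _ hx
      have h2 : ‖Q (h m i) - Q (f (j+1))‖ ≤ Lip (δ (j+1)) (f (j+1)) * ‖h m i - f (j+1)‖ :=
        hLip _ _ (hδ _) (hball _) _ hx _ (mem_closedBall_self (hδ _))
      have htri : ‖T (j+1) (h m i) - Q (f (j+1))‖ ≤
          ‖T (j+1) (h m i) - Q (h m i)‖ + ‖Q (h m i) - Q (f (j+1))‖ := by
        have := dist_triangle (T (j+1) (h m i)) (Q (h m i)) (Q (f (j+1)))
        simpa [dist_eq_norm] using this
      have hLnn : 0 ≤ Lip (δ (j+1)) (f (j+1)) := hLip_nonneg _ _ (hδ _) (hball _)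
      calc ‖h m (i+1) - f j‖ = ‖T (j+1) (h m i) - Q (f (j+1))‖ := by
            rw [hhs, hmi, hfq]
        _ ≤ ‖T (j+1) (h m i) - Q (h m i)‖ + ‖Q (h m i) - Q (f (j+1))‖ := htri
        _ ≤ Err (δ (j+1)) (f (j+1)) + Lip (δ (j+1)) (f (j+1)) * S m (j+1) := by
            refine add_le_add h1 (h2.trans ?_)
            exact mul_le_mul_of_nonneg_left hIH hLnn
        _ = S m j := (hS_rec m j (by omega)).symm
  -- the finite approximate backward orbits
  let G : ℕ → ℕ → EuclideanSpace ℝ (Fin d) := fun m j => if j < m then h m (m - j) else f j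
  have hG : ∀ m j, G m j = if j < m then h m (m - j) else f j := fun _ _ => rfl
  have hGmem : ∀ m j, G m j ∈ closedBall (f j) (δ j) := by
    intro m j
    rw [hG]
    by_cases hc : j < m
    · rw [if_pos hc, mem_closedBall, dist_eq_norm]
      exact (hbound m (m - j) j (by omega)).trans (hS_le m j)
    · rw [if_neg hc]
      exact mem_closedBall_self (hδ j)
  have hrel : ∀ m j, 1 ≤ j → j ≤ m → G m (j - 1) = T j (G m j) := by
    intro m j hj1 hjm
    have h1 : j - 1 < m := by omega
    have h2 : m - (j - 1) = (m - j) + 1 := by omega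
    have h3 : m - (m - j) = j := by omega
    rw [hG, if_pos h1, h2, hhs, h3]
    congr 1
    rw [hG]
    by_cases hc : j < m
    · rw [if_pos hc]
    · have : j = m := by omega
      subst this
      rw [if_neg hc, Nat.sub_self, hh0]
  -- compactness: take limits along an ultrafilter
  let U : Ultrafilter ℕ := Ultrafilter.of Filter.atTop
  have hU : (U : Filter ℕ) ≤ Filter.atTop := Ultrafilter.of_le _
  have key : ∀ j, ∃ a ∈ closedBall (f j) (δ j),
      Filter.Tendsto (fun m => G m j) U (nhds a) := by
    intro j
    have hcpt : IsCompact (closedBall (f j) (δ j)) := isCompact_closedBall _ _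
    have hmem : closedBall (f j) (δ j) ∈ U.map (fun m => G m j) :=
      Filter.mem_map.mpr (Filter.univ_mem' (fun m => hGmem m j))
    obtain ⟨a, ha, hle⟩ := hcpt.ultrafilter_le_nhds (U.map (fun m => G m j))
      (Filter.le_principal_iff.mpr hmem)
    exact ⟨a, ha, hle⟩
  choose g hg1 hg2 using key
  refine ⟨g, hg1, fun j hj => ?_⟩
  -- pass to the limit in the orbit relation
  have hmemF : g j ∈ F := hball j (hg1 j)
  have h1 : Filter.Tendsto (fun m => G m j) U (nhdsWithin (g j) F) := by
    rw [tendsto_nhdsWithin_iff]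
    exact ⟨hg2 j, Filter.Eventually.of_forall fun m => hball j (hGmem m j)⟩
  have h2 : Filter.Tendsto (fun m => T j (G m j)) U (nhds (T j (g j))) :=
    Filter.Tendsto.comp (hTcont j hj (g j) hmemF) h1
  have hge : ∀ᶠ m in (U : Filter ℕ), j ≤ m := hU (Filter.eventually_ge_atTop j)
  have hev : ∀ᶠ m in (U : Filter ℕ), T j (G m j) = G m (j - 1) :=
    hge.mono fun m hm => (hrel m j hj hm).symm
  have h3 : Filter.Tendsto (fun m => G m (j - 1)) U (nhds (T j (g j))) :=
    h2.congr' hev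
  exact tendsto_nhds_unique (hg2 (j - 1)) h3
end
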